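/- Let p be a prime and f ∈ (F_p[t])[x] a polynomial that is monic of positive degree in x, and set g := Res_x(f, X^p − X) ∈ F_p[t]. Then f(t₀, x₀) ≠ 0 for all t₀, x₀ ∈ F_p if and only if g and T^p − T are coprime in F_p[T] (i.e., they generate the unit ideal). -/

import Mathlib

/-! Once `_root_.resultant` is identified with Mathlib's `Polynomial.resultant`, monicity of `f`
lets the resultant commute with the specialisation `t ↦ t₀`. Over the field `F_p` the resultant
of `f(t₀, x)` and `X ^ p - X` is nonzero iff the two are coprime, and since
`X ^ p - X = ∏ a, (X - a)`, coprimality with `X ^ p - X` means having no root in `F_p`; applying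
the last fact once more in the variable `t` gives the theorem. -/

open Polynomial

/-- The Sylvester matrix of two polynomials `f` and `g` over a commutative ring:
a `(natDegree f + natDegree g) × (natDegree f + natDegree g)` matrix, whose first
`natDegree g` rows carry the shifted coefficient sequences of `f` (from the leading
coefficient down), and whose remaining `natDegree f` rows carry the shifted
coefficient sequences of `g`. -/
noncomputable def sylvesterMatrix {R : Type*} [CommRing R] (f g : Polynomial R) :
    Matrix (Fin (f.natDegree + g.natDegree)) (Fin (f.natDegree + g.natDegree)) R :=
  Matrix.of fun i j =>
    if (i : ℕ) < g.natDegree then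
      if (i : ℕ) ≤ (j : ℕ) ∧ (j : ℕ) ≤ (i : ℕ) + f.natDegree then
        f.coeff (f.natDegree + i - j)
      else 0
    else
      if (i : ℕ) - g.natDegree ≤ (j : ℕ) ∧ (j : ℕ) ≤ ((i : ℕ) - g.natDegree) + g.natDegree then
        g.coeff (g.natDegree + ((i : ℕ) - g.natDegree) - j)
      else 0

/-- The resultant of two polynomials: the determinant of their Sylvester matrix. -/
noncomputable def resultant {R : Type*} [CommRing R] (f g : Polynomial R) : R :=
  (sylvesterMatrix f g).det

/-- Both matrices carry the shifted coefficient vectors of `f` and `g`: ours as rows, read from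
the leading coefficient down, Mathlib's as columns, read from the constant term up. -/
theorem sylvesterMatrix_eq_transpose_sylvester {R : Type*} [CommRing R] (f g : R[X]) :
    sylvesterMatrix f g =
      ((f.sylvester g f.natDegree g.natDegree).submatrix Fin.rev Fin.rev).transpose := by
  ext ⟨i, hi⟩ ⟨j, hj⟩
  simp only [sylvesterMatrix, sylvester, Matrix.of_apply, Matrix.transpose_apply,
    Matrix.submatrix_apply, Fin.addCases, Set.mem_Icc, Fin.val_rev, Fin.val_castLT,
    Fin.val_subNat, Fin.val_cast, eq_rec_constant]
  split_ifs <;> first | rfl | omega | (congr 1; omega)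

theorem resultant_eq_polynomial_resultant {R : Type*} [CommRing R] (f g : R[X]) :
    _root_.resultant f g = f.resultant g := by
  rw [_root_.resultant, sylvesterMatrix_eq_transpose_sylvester, Matrix.det_transpose]
  exact Matrix.det_submatrix_equiv_self Fin.revPerm _

namespace Polynomial

theorem Monic.resultant_map {R S : Type*} [CommRing R] [CommRing S] [Nontrivial S]
    (φ : R →+* S) {f g : R[X]} (hf : f.Monic) (hg : g.Monic) :
    (f.map φ).resultant (g.map φ) = φ (f.resultant g) := by
  rw [← resultant_map_map, hf.natDegree_map, hg.natDegree_map]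

theorem monic_X_pow_sub_X {R : Type*} [Ring R] {n : ℕ} (hn : 1 < n) :
    (X ^ n - X : R[X]).Monic :=
  monic_X_pow_sub (degree_X_le.trans_lt (mod_cast hn))

theorem resultant_ne_zero_iff_isCoprime {K : Type*} [Field K] {f g : K[X]} (hf : f ≠ 0) :
    f.resultant g ≠ 0 ↔ IsCoprime f g := by
  simp [resultant_eq_zero_iff, hf]

theorem isCoprime_X_sub_C_iff {K : Type*} [Field K] {g : K[X]} {a : K} :
    IsCoprime g (X - C a) ↔ g.eval a ≠ 0 := by
  rw [isCoprime_comm, (irreducible_X_sub_C a).coprime_iff_not_dvd, dvd_iff_isRoot, IsRoot]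

end Polynomial

namespace FiniteField

variable {K : Type*} [Field K] [Fintype K]

theorem X_pow_card_sub_X_eq_prod : (X ^ Fintype.card K - X : K[X]) = ∏ a : K, (X - C a) := by
  have hcard : (X ^ Fintype.card K - X : K[X]).roots.card =
      (X ^ Fintype.card K - X : K[X]).natDegree := by
    rw [roots_X_pow_card_sub_X, X_pow_card_sub_X_natDegree_eq K Fintype.one_lt_card]
    rfl
  rw [← prod_multiset_X_sub_C_of_monic_of_roots_card_eq
    (monic_X_pow_sub_X Fintype.one_lt_card) hcard, roots_X_pow_card_sub_X]
  rfl

theorem isCoprime_X_pow_card_sub_X_iff {g : K[X]} :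
    IsCoprime g (X ^ Fintype.card K - X) ↔ ∀ a, g.eval a ≠ 0 := by
  simp only [X_pow_card_sub_X_eq_prod, IsCoprime.prod_right_iff, Finset.mem_univ, true_imp_iff,
    isCoprime_X_sub_C_iff]

end FiniteField

theorem Polynomial.Monic.forall_evalEval_ne_zero_iff_isCoprime_resultant {K : Type*} [Field K]
    [Fintype K] {f : K[X][X]} (hf : f.Monic) :
    (∀ t x : K, f.evalEval t x ≠ 0) ↔
      IsCoprime (f.resultant (X ^ Fintype.card K - X)) (X ^ Fintype.card K - X) := by
  have eval_resultant_ne_zero_iff (t : K) :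
      (f.resultant (X ^ Fintype.card K - X)).eval t ≠ 0 ↔ ∀ x, f.evalEval t x ≠ 0 := by
    rw [← coe_evalRingHom, ← hf.resultant_map _ (monic_X_pow_sub_X Fintype.one_lt_card), Polynomial.map_sub, Polynomial.map_pow,
      map_X, resultant_ne_zero_iff_isCoprime (hf.map _).ne_zero,
      FiniteField.isCoprime_X_pow_card_sub_X_iff]
    simp only [map_evalRingHom_eval]
  rw [FiniteField.isCoprime_X_pow_card_sub_X_iff]
  exact forall_congr' fun t => (eval_resultant_ne_zero_iff t).symm

theorem no_rational_zero_iff_coprime_general (p : ℕ) [Fact p.Prime]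
    (f : Polynomial (Polynomial (ZMod p))) (hmonic : f.Monic) :
    (∀ t₀ x₀ : ZMod p, (f.eval (C x₀)).eval t₀ ≠ 0) ↔
      IsCoprime (_root_.resultant f (X ^ p - X)) (X ^ p - X : Polynomial (ZMod p)) := by
  have h := hmonic.forall_evalEval_ne_zero_iff_isCoprime_resultant
  rwa [ZMod.card, ← resultant_eq_polynomial_resultant] at h

/-- For monic `f ∈ (F_p[t])[x]` of positive degree and `g = Res_x(f, X^p − X)`:
`f` has no zero on `F_p × F_p` iff `g` and `T^p − T` are coprime in `F_p[T]`. -/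
theorem no_rational_zero_iff_coprime (p : ℕ) [Fact p.Prime]
    (f : Polynomial (Polynomial (ZMod p))) (hmonic : f.Monic) (hdeg : 0 < f.natDegree) :
    (∀ t₀ x₀ : ZMod p, (f.eval (C x₀)).eval t₀ ≠ 0) ↔
      IsCoprime (_root_.resultant f (X ^ p - X)) (X ^ p - X : Polynomial (ZMod p)) :=
  no_rational_zero_iff_coprime_general p f hmonic
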